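/- Let m ≥ 2 be an integer, let s ≥ 4 be an even integer, and let k ≥ 0 be an integer. If (k+1)·s ≤ m + 1 and ∑_{l=0}^{(k+1)·s - 1} (-1)^l · C(m,l) = 0, then (k+1)·s = m + 1. -/

import Mathlib

theorem Int.alternating_sum_range_choose_eq_zero_iff {m n : ℕ} (hm : 0 < m) (hn : 0 < n) :
    ∑ l ∈ Finset.range n, ((-1) ^ l * m.choose l : ℤ) = 0 ↔ m < n := by
  obtain ⟨m, rfl⟩ := Nat.exists_eq_add_of_lt hm
  obtain ⟨n, rfl⟩ := Nat.exists_eq_add_of_lt hn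
  rw [zero_add, zero_add, Int.alternating_sum_range_choose_eq_choose]
  simp only [mul_eq_zero, pow_eq_zero_iff', neg_eq_zero, one_ne_zero, false_and, false_or,
    Nat.cast_eq_zero, Nat.choose_eq_zero_iff]
  omega

theorem alternating_sum_vanishing_forces_equality_general (m s k : ℕ) (hm : 2 ≤ m) (hs : 4 ≤ s)
    (hle : (k + 1) * s ≤ m + 1)
    (hsum : ∑ l ∈ Finset.range ((k + 1) * s), (-1 : ℤ) ^ l * (m.choose l : ℤ) = 0) :
    (k + 1) * s = m + 1 := by
  have hpos : 0 < (k + 1) * s := Nat.mul_pos k.succ_pos (by omega)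
  have hlt : m < (k + 1) * s := (Int.alternating_sum_range_choose_eq_zero_iff (by omega) hpos).1 hsum
  omega

/-- Let `m ≥ 2`, let `s ≥ 4` be even, and `k ≥ 0`. If `(k+1)·s ≤ m + 1` and
`∑_{l=0}^{(k+1)·s - 1} (-1)^l * C(m,l) = 0`, then `(k+1)·s = m + 1`. -/
theorem alternating_sum_vanishing_forces_equality (m s k : ℕ) (hm : 2 ≤ m) (hs : 4 ≤ s)
    (hse : Even s) (hle : (k + 1) * s ≤ m + 1)
    (hsum : ∑ l ∈ Finset.range ((k + 1) * s), (-1 : ℤ) ^ l * (m.choose l : ℤ) = 0) :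
    (k + 1) * s = m + 1 :=
  alternating_sum_vanishing_forces_equality_general m s k hm hs hle hsum
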